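/- arXiv:0806.2023 — 2 statements merged into one kernel-verified Lean document; each statement's English description precedes it below -/
import Mathlib

section
/- Suppose 0 < ε < 1/2, r ≥ 2, x ≥ (1+ε)(r+1), 0 < δ < (ε/6r)², and G is an r-graph with exactly C(x,r) edges such that K^r_{r+1}(G) > (1−δ)·C(x,r+1). Then the number of vertices v of G with degree d(v) > (1+δ^{1/2})·C(x−1,r−1) is at most δ^{1/2}·x. -/
/-- Generalized binomial coefficient `C(x, k) = x(x-1)⋯(x-k+1)/k!` for real `x`. -/
noncomputable def gchoose (x : ℝ) (k : ℕ) : ℝ :=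
  (∏ i ∈ Finset.range k, (x - i)) / (Nat.factorial k)

/-- `cliqueCount r G m` is the number of `m`-element vertex subsets all of whose
`r`-element subsets are edges of `G` (i.e. the number of copies of `K^r_m` in `G`). -/
def cliqueCount {V : Type*} [Fintype V] [DecidableEq V]
    (r : ℕ) (G : Finset (Finset V)) (m : ℕ) : ℕ :=
  ((Finset.powersetCard m (Finset.univ : Finset V)).filter
    (fun T => ∀ S ∈ Finset.powersetCard r T, S ∈ G)).card

/-- The degree of a vertex: the number of edges of `G` containing `v`. -/
def deg {V : Type*} [Fintype V] [DecidableEq V]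
    (G : Finset (Finset V)) (v : V) : ℕ :=
  (G.filter fun e => v ∈ e).card

/-!
Lovász's form of the Kruskal–Katona theorem: an `r`-graph with at most `C(y, r)` edges, `r ≤ y`,
has at most `(y - r) |G| / (r + 1)` cliques on `r + 1` vertices. It holds locally: if `K_v` counts
those cliques through `v` (the degree of `v` in the `(r+1)`-graph of cliques), then
`r K_v ≤ (y - r) d(v)`. For `d(v) ≥ C(y-1, r-1)` this follows from `K_v + d(v) ≤ |G|`; otherwise
induction applies to the link of `v`, whose cliques contain those through `v` with `v` removed.

A vertex of degree above `(1 + √δ) C(x-1, r-1)` satisfies the local bound with slack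
`√δ · r C(x, r)`. Summing over all vertices, near-extremality of the clique count caps the total
slack at `δ (x - r) · r C(x, r)`, so there are fewer than `√δ x` such vertices.
-/
open Finset

lemma succ_mul_gchoose_succ_eq_mul_gchoose_sub_one (y : ℝ) (n : ℕ) :
    ((n : ℝ) + 1) * gchoose y (n + 1) = y * gchoose (y - 1) n := by
  unfold gchoose
  rw [prod_range_succ', Nat.factorial_succ]
  have h : ∀ i ∈ range n, y - ((i + 1 : ℕ) : ℝ) = y - 1 - i := by
    intro i _; push_cast; ring
  rw [prod_congr rfl h]
  push_cast
  field_simp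
  ring

lemma succ_mul_gchoose_succ_eq_sub_mul_gchoose (y : ℝ) (n : ℕ) :
    ((n : ℝ) + 1) * gchoose y (n + 1) = (y - n) * gchoose y n := by
  unfold gchoose
  rw [prod_range_succ, Nat.factorial_succ]
  push_cast
  field_simp

@[simp]
lemma gchoose_zero (y : ℝ) : gchoose y 0 = 1 := by simp [gchoose]

lemma gchoose_pos {y : ℝ} {n : ℕ} (h : (n : ℝ) - 1 < y) : 0 < gchoose y n := by
  refine div_pos (prod_pos fun i hi => ?_) (by positivity)
  have : (i : ℝ) + 1 ≤ n := by exact_mod_cast mem_range.1 hi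
  linarith

section Hypergraph

variable {V : Type*} [DecidableEq V]

def link (G : Finset (Finset V)) (v : V) : Finset (Finset V) :=
  (G.filter fun e => v ∈ e).image fun e => e.erase v

lemma card_of_mem_link {G : Finset (Finset V)} {r : ℕ} (hG : ∀ e ∈ G, e.card = r + 1) (v : V) :
    ∀ e ∈ link G v, e.card = r := by
  intro e he
  obtain ⟨a, ha, rfl⟩ := mem_image.1 he
  rw [mem_filter] at ha
  simp [card_erase_of_mem ha.2, hG a ha.1]

variable [Fintype V]

def cliqueFinset (r : ℕ) (G : Finset (Finset V)) (m : ℕ) : Finset (Finset V) :=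
  (powersetCard m univ).filter fun T => ∀ S ∈ powersetCard r T, S ∈ G

lemma card_cliqueFinset (r : ℕ) (G : Finset (Finset V)) (m : ℕ) :
    (cliqueFinset r G m).card = cliqueCount r G m := rfl

lemma mem_cliqueFinset {r m : ℕ} {G : Finset (Finset V)} {T : Finset V} :
    T ∈ cliqueFinset r G m ↔ T.card = m ∧ ∀ S ⊆ T, S.card = r → S ∈ G := by
  simp [cliqueFinset, mem_powersetCard]

lemma card_link (G : Finset (Finset V)) (v : V) : (link G v).card = deg G v :=
  card_image_of_injOn fun _ ha _ hb => erase_injOn' v (mem_filter.1 ha).2 (mem_filter.1 hb).2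

lemma sum_deg {F : Finset (Finset V)} {k : ℕ} (hF : ∀ e ∈ F, e.card = k) :
    ∑ v, deg F v = k * F.card := by
  simp only [deg, card_filter]
  rw [sum_comm, sum_congr rfl fun e he => ?_, sum_const, smul_eq_mul, mul_comm]
  rw [sum_ite_mem, univ_inter, sum_const, smul_eq_mul, mul_one, hF e he]

lemma deg_cliqueFinset_eq_zero {G : Finset (Finset V)} {v : V} {r m : ℕ} (hv : deg G v = 0)
    (hr : 1 ≤ r) (hrm : r ≤ m) : deg (cliqueFinset r G m) v = 0 := by
  rw [deg, card_eq_zero, filter_eq_empty_iff]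
  intro T hT hvT
  rw [mem_cliqueFinset] at hT
  obtain ⟨S, hvS, hST, hS⟩ :=
    exists_subsuperset_card_eq (singleton_subset_iff.2 hvT) (by simpa using hr) (hT.1 ▸ hrm)
  have : S ∈ G.filter fun e => v ∈ e := mem_filter.2 ⟨hT.2 S hST hS, singleton_subset_iff.1 hvS⟩
  rw [deg, card_eq_zero] at hv
  simp [hv] at this

lemma deg_cliqueFinset_le_card_cliqueFinset_link (G : Finset (Finset V)) (v : V) (r m : ℕ) :
    deg (cliqueFinset (r + 1) G (m + 1)) v ≤ (cliqueFinset r (link G v) m).card := by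
  refine card_le_card_of_injOn (fun T => T.erase v) (fun T hT => ?_)
    fun _ ha _ hb => erase_injOn' v (mem_filter.1 ha).2 (mem_filter.1 hb).2
  obtain ⟨hT, hvT⟩ := mem_filter.1 hT
  rw [mem_cliqueFinset] at hT
  rw [mem_coe, mem_cliqueFinset, card_erase_of_mem hvT, hT.1, Nat.add_sub_cancel]
  refine ⟨rfl, fun S hS hScard => ?_⟩
  have hvS : v ∉ S := fun h => (mem_erase.1 (hS h)).1 rfl
  refine mem_image.2
    ⟨insert v S, mem_filter.2 ⟨hT.2 _ ?_ ?_, mem_insert_self v S⟩, erase_insert hvS⟩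
  · exact insert_subset hvT (hS.trans (erase_subset v T))
  · rw [card_insert_of_notMem hvS, hScard]

/-- Removing `v` maps the `(r+1)`-cliques through `v` injectively to the edges missing `v`. -/
lemma deg_cliqueFinset_add_deg_le_card (G : Finset (Finset V)) (v : V) (r : ℕ) :
    deg (cliqueFinset r G (r + 1)) v + deg G v ≤ G.card := by
  have hmiss : deg (cliqueFinset r G (r + 1)) v ≤ (G.filter fun e => v ∉ e).card := by
    refine card_le_card_of_injOn (fun T => T.erase v) (fun T hT => ?_)
      fun _ ha _ hb => erase_injOn' v (mem_filter.1 ha).2 (mem_filter.1 hb).2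
    obtain ⟨hT, hvT⟩ := mem_filter.1 hT
    rw [mem_cliqueFinset] at hT
    refine mem_filter.2 ⟨hT.2 _ (erase_subset v T) ?_, notMem_erase v T⟩
    rw [card_erase_of_mem hvT, hT.1, Nat.add_sub_cancel]
  have hsplit := card_filter_add_card_filter_not (s := G) fun e => v ∈ e
  simp only [deg] at hmiss ⊢
  omega

end Hypergraph

section KruskalKatona

variable {V : Type*} [Fintype V] [DecidableEq V]

lemma succ_mul_deg_cliqueFinset_add_le {G : Finset (Finset V)} {n : ℕ} {y t : ℝ} (hy : 0 ≤ y)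
    (hcard : (G.card : ℝ) ≤ gchoose y (n + 1)) {v : V}
    (hv : (1 + t) * gchoose (y - 1) n ≤ deg G v) :
    ((n : ℝ) + 1) * deg (cliqueFinset (n + 1) G (n + 2)) v + t * ((n + 1) * gchoose y (n + 1)) ≤
      (y - (n + 1)) * deg G v := by
  have hKd : (deg (cliqueFinset (n + 1) G (n + 2)) v : ℝ) + deg G v ≤ G.card := by
    exact_mod_cast deg_cliqueFinset_add_deg_le_card G v (n + 1)
  have hK : ((n : ℝ) + 1) * deg (cliqueFinset (n + 1) G (n + 2)) v ≤
      (n + 1) * (gchoose y (n + 1) - deg G v) :=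
    mul_le_mul_of_nonneg_left (by linarith) (by positivity)
  have hyv := mul_le_mul_of_nonneg_left hv hy
  have habs := succ_mul_gchoose_succ_eq_mul_gchoose_sub_one y n
  have habs_t : t * ((n + 1) * gchoose y (n + 1)) = t * (y * gchoose (y - 1) n) := by rw [habs]
  linarith

lemma sum_succ_mul_deg_cliqueFinset_add_le {G : Finset (Finset V)} {n : ℕ} {c : ℝ} (f : V → ℝ)
    (hG : ∀ e ∈ G, e.card = n + 1)
    (h : ∀ v, ((n : ℝ) + 1) * deg (cliqueFinset (n + 1) G (n + 2)) v + f v ≤ c * deg G v) :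
    ((n : ℝ) + 1) * ((n + 2) * (cliqueFinset (n + 1) G (n + 2)).card) + ∑ v, f v ≤
      c * ((n + 1) * G.card) := by
  have hK : ∑ v, (deg (cliqueFinset (n + 1) G (n + 2)) v : ℝ) =
      (n + 2) * (cliqueFinset (n + 1) G (n + 2)).card := by
    exact_mod_cast sum_deg fun T hT => (mem_cliqueFinset.1 hT).1
  have hd : ∑ v, (deg G v : ℝ) = (n + 1) * G.card := by exact_mod_cast sum_deg hG
  rw [← hK, ← hd, mul_sum, mul_sum, ← sum_add_distrib]
  exact sum_le_sum fun v _ => h v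

theorem succ_mul_deg_cliqueFinset_le (n : ℕ) {G : Finset (Finset V)} {y : ℝ}
    (hG : ∀ e ∈ G, e.card = n + 1) (hy : (n : ℝ) + 1 ≤ y)
    (hcard : (G.card : ℝ) ≤ gchoose y (n + 1)) (v : V) :
    ((n : ℝ) + 1) * deg (cliqueFinset (n + 1) G (n + 2)) v ≤ (y - (n + 1)) * deg G v := by
  obtain hv | hv := le_or_gt (gchoose (y - 1) n) (deg G v)
  · simpa using succ_mul_deg_cliqueFinset_add_le (t := 0) (by linarith) hcard (by simpa using hv)
  cases n with
  | zero =>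
    have hd : deg G v = 0 := by
      rw [gchoose_zero] at hv
      exact Nat.lt_one_iff.1 (by exact_mod_cast hv)
    simp [hd, deg_cliqueFinset_eq_zero (r := 1) (m := 2) hd le_rfl (by norm_num)]
  | succ n =>
    push_cast at hy hv ⊢
    have hL := card_of_mem_link hG v
    have hLcard : ((link G v).card : ℝ) ≤ gchoose (y - 1) (n + 1) := by
      rw [card_link]; exact hv.le
    have hLK := sum_succ_mul_deg_cliqueFinset_add_le (fun _ => 0) hL fun w => by
      simpa using succ_mul_deg_cliqueFinset_le n hL (by linarith) hLcard w
    have hKv : (deg (cliqueFinset (n + 1 + 1) G (n + 1 + 2)) v : ℝ) ≤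
        (cliqueFinset (n + 1) (link G v) (n + 2)).card := by
      exact_mod_cast deg_cliqueFinset_le_card_cliqueFinset_link G v (n + 1) (n + 2)
    rw [card_link, sum_const_zero, add_zero, mul_left_comm _ ((n : ℝ) + 1)] at hLK
    have hKL := le_of_mul_le_mul_left hLK (by positivity)
    linarith [mul_le_mul_of_nonneg_left hKv (by positivity : (0 : ℝ) ≤ n + 2)]

end KruskalKatona

theorem stmt7_general {V : Type*} [Fintype V] [DecidableEq V] (ε : ℝ) (hε0 : 0 < ε)
    (r : ℕ) (hr : 2 ≤ r) (x : ℝ) (hx : (1 + ε) * (r + 1) ≤ x)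
    (δ : ℝ) (hδ0 : 0 < δ)
    (G : Finset (Finset V)) (hG : ∀ e ∈ G, e.card = r)
    (hcard : (G.card : ℝ) = gchoose x r)
    (hK : (1 - δ) * gchoose x (r + 1) < (cliqueCount r G (r + 1) : ℝ)) :
    ((((Finset.univ : Finset V).filter fun v =>
        (1 + Real.sqrt δ) * gchoose (x - 1) (r - 1) < (deg G v : ℝ)).card : ℝ)) ≤
      Real.sqrt δ * x := by
  obtain ⟨s, rfl⟩ : ∃ s, r = s + 1 := ⟨r - 1, by omega⟩
  set t := Real.sqrt δ
  set B := univ.filter fun v => (1 + t) * gchoose (x - 1) (s + 1 - 1) < (deg G v : ℝ)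
  have hxs : (s : ℝ) + 2 ≤ x := by push_cast at hx; nlinarith
  have hvertex : ∀ v, ((s : ℝ) + 1) * deg (cliqueFinset (s + 1) G (s + 2)) v +
      (if v ∈ B then t * ((s + 1) * gchoose x (s + 1)) else 0) ≤ (x - (s + 1)) * deg G v := by
    intro v
    split_ifs with hv
    · exact succ_mul_deg_cliqueFinset_add_le (by linarith) hcard.le (mem_filter.1 hv).2.le
    · simpa using succ_mul_deg_cliqueFinset_le s hG (by linarith) hcard.le v
  have hsum := sum_succ_mul_deg_cliqueFinset_add_le _ hG hvertex
  rw [sum_ite_mem, univ_inter, sum_const, nsmul_eq_mul, ← hcard] at hsum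
  have hKx : (1 - δ) * ((x - (s + 1)) * G.card) <
      (s + 2) * (cliqueFinset (s + 1) G (s + 2)).card := by
    have hpascal := succ_mul_gchoose_succ_eq_sub_mul_gchoose x (s + 1)
    push_cast at hpascal hK
    calc (1 - δ) * ((x - (s + 1)) * G.card) = (s + 2) * ((1 - δ) * gchoose x (s + 2)) := by
          rw [hcard, ← hpascal]; ring
      _ < (s + 2) * cliqueCount (s + 1) G (s + 2) := mul_lt_mul_of_pos_left hK (by positivity)
  have hM : (0 : ℝ) < (s + 1) * G.card := by
    have := gchoose_pos (y := x) (n := s + 1) (by push_cast; linarith)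
    rw [hcard]; positivity
  have hloss : B.card * t * ((s + 1) * G.card) < δ * x * ((s + 1) * G.card) := by
    have hs : (0 : ℝ) < s + 1 := by positivity
    linarith [mul_lt_mul_of_pos_left hKx hs, mul_nonneg (mul_nonneg hδ0.le hs.le) hM.le]
  have hBt : t * B.card < t * (t * x) := by
    rw [← mul_assoc, Real.mul_self_sqrt hδ0.le, mul_comm t]
    exact lt_of_mul_lt_mul_right hloss hM.le
  exact (lt_of_mul_lt_mul_left hBt (Real.sqrt_nonneg δ)).le

/-- Quantitative stability for the Kruskal–Katona theorem, part (2): at most `δ^{1/2}·x`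
vertices have degree greater than `(1+δ^{1/2})·C(x-1,r-1)`. -/
theorem stmt7 {V : Type*} [Fintype V] [DecidableEq V] (ε : ℝ) (hε0 : 0 < ε)
    (hε1 : ε < 1 / 2) (r : ℕ) (hr : 2 ≤ r) (x : ℝ) (hx : (1 + ε) * (r + 1) ≤ x)
    (δ : ℝ) (hδ0 : 0 < δ) (hδ : δ < (ε / (6 * r)) ^ 2)
    (G : Finset (Finset V)) (hG : ∀ e ∈ G, e.card = r)
    (hcard : (G.card : ℝ) = gchoose x r)
    (hK : (1 - δ) * gchoose x (r + 1) < (cliqueCount r G (r + 1) : ℝ)) :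
    ((((Finset.univ : Finset V).filter fun v =>
        (1 + Real.sqrt δ) * gchoose (x - 1) (r - 1) < (deg G v : ℝ)).card : ℝ)) ≤
      Real.sqrt δ * x :=
  stmt7_general ε hε0 r hr x hx δ hδ0 G hG hcard hK
end

section
/- For every integer r ≥ 3 there exists a threshold u₀(r) with the following property: if C, C' > 0 and u, v, w are real numbers with v ≥ r−1, w ≥ r−2, u > u₀(r), satisfying C(u,r) = C(v,r) + C(w,r−1) and C' ≤ C(w,r−1) < C(u−1,r−1) − C, and moreover w > u − 3r, then C(v,r−1) + C(w,r−2) − C(u,r−1) > C/(3u). -/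
/-!
Write `r = m + 3`, `D = C(u-1,r-1) - C(w,r-1) > C`, `δ = v - (u-1)` and `ε = u - 1 - w`.
By Pascal's rule the hypothesis reads `C(v,r) - C(u-1,r) = D`, which forces `u - 1 ≤ v ≤ u`, and
the defect `C(v,r-1) + C(w,r-2) - C(u,r-1)` splits as
`[C(v,r-1) - C(u-1,r-1)] - [C(u-1,r-2) - C(w,r-2)]`. Mean-value bounds for
`x ↦ C(x,k)` bound `D` above by `δ C(u,r-1)` and below by `ε C(w-1,r-2)`, the first bracket
below by `δ C(u-2,r-2)` and the second above by `ε C(u-1,r-3)`, so the defect is at least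
`D (C(u-2,r-2)/C(u,r-1) - C(u-1,r-3)/C(w-1,r-2))`. Since `w > u - 3r`, the last factor is
`(r-1)/u - (r-2)/u + O(r³/u²) ≥ 1/(2u)` for `u ≥ 16 r³`, and `D/(2u) > C/(3u)`.
-/

open Polynomial

theorem descPochhammer_succ_eval_eq_mul {R : Type*} [CommRing R] (n : ℕ) (s : R) :
    (descPochhammer R (n + 1)).eval s = s * (descPochhammer R n).eval (s - 1) := by
  simp [descPochhammer_succ_left, eval_comp]

theorem descPochhammer_succ_eval_eq_add {R : Type*} [CommRing R] (n : ℕ) (s : R) :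
    (descPochhammer R (n + 1)).eval s =
      (descPochhammer R (n + 1)).eval (s - 1) + (n + 1) * (descPochhammer R n).eval (s - 1) := by
  rw [descPochhammer_succ_eval_eq_mul, descPochhammer_succ_eval]
  ring

section descPochhammer

variable {S : Type*} [CommRing S] [LinearOrder S] [IsStrictOrderedRing S]

theorem descPochhammer_eval_le_pow {n : ℕ} {s b : S} (hs : (n : S) - 1 ≤ s) (hsb : s ≤ b) :
    (descPochhammer S n).eval s ≤ b ^ n := by
  induction n with
  | zero => simp
  | succ n ih =>
    push_cast at hs
    rw [descPochhammer_succ_eval, pow_succ]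
    have hn : (0 : S) ≤ n := n.cast_nonneg
    exact mul_le_mul (ih (by linarith)) (by linarith) (by linarith) (pow_nonneg (by linarith) n)

theorem descPochhammer_eval_le_eval {n : ℕ} {a b : S} (ha : (n : S) - 1 ≤ a) (hab : a ≤ b) :
    (descPochhammer S n).eval a ≤ (descPochhammer S n).eval b :=
  monotoneOn_descPochhammer_eval n ha (ha.trans hab) hab

theorem descPochhammer_succ_eval_sub_le {n : ℕ} {u v : S} (hv : (n : S) ≤ v) (hvu : v ≤ u) :
    (descPochhammer S (n + 1)).eval u - (descPochhammer S (n + 1)).eval v ≤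
      (u - v) * (n + 1) * (descPochhammer S n).eval u := by
  induction n with
  | zero => simp
  | succ n ih =>
    push_cast at hv ⊢
    have ih := ih (by linarith)
    have hc : 0 ≤ (u - v) * (n + 1) * (descPochhammer S n).eval u :=
      mul_nonneg (mul_nonneg (by linarith) (by positivity)) (descPochhammer_nonneg (by linarith))
    have hmono : (descPochhammer S (n + 1)).eval v ≤ (descPochhammer S (n + 1)).eval u :=
      descPochhammer_eval_le_eval (by push_cast; linarith) hvu
    have hu := descPochhammer_succ_eval n u
    rw [descPochhammer_succ_eval (n + 1) u, descPochhammer_succ_eval (n + 1) v]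
    push_cast
    -- `P u * (u - n - 1) - P v * (v - n - 1) = (P u - P v) * (u - n - 1) + P v * (u - v)`
    linear_combination mul_le_mul_of_nonneg_right ih (by linarith : (0 : S) ≤ u - (n + 1)) +
      mul_le_mul_of_nonneg_right hmono (by linarith : (0 : S) ≤ u - v) + hc -
      (u - v) * (n + 1) * hu

theorem le_descPochhammer_succ_eval_sub {n : ℕ} {u v : S} (hv : (n : S) ≤ v) (hvu : v ≤ u) :
    (u - v) * (n + 1) * (descPochhammer S n).eval (v - 1) ≤
      (descPochhammer S (n + 1)).eval u - (descPochhammer S (n + 1)).eval v := by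
  induction n with
  | zero => simp
  | succ n ih =>
    push_cast at hv ⊢
    have ih := ih (by linarith)
    have hc : 0 ≤ (u - v) * (n + 1) * (descPochhammer S n).eval (v - 1) :=
      mul_nonneg (mul_nonneg (by linarith) (by positivity)) (descPochhammer_nonneg (by linarith))
    have hmono : (descPochhammer S (n + 1)).eval (v - 1) ≤ (descPochhammer S (n + 1)).eval v :=
      descPochhammer_eval_le_eval (by push_cast; linarith) (by linarith)
    have hv1 := descPochhammer_succ_eval n (v - 1)
    rw [descPochhammer_succ_eval (n + 1) u, descPochhammer_succ_eval (n + 1) v]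
    push_cast
    linear_combination mul_le_mul_of_nonneg_right ih (by linarith : (0 : S) ≤ u - (n + 1)) +
      mul_le_mul_of_nonneg_right hmono (by linarith : (0 : S) ≤ u - v) +
      mul_nonneg hc (sub_nonneg.2 hvu) + (u - v) * (n + 1) * hv1

end descPochhammer

open scoped Nat

theorem gchoose_eq_descPochhammer_eval (x : ℝ) (k : ℕ) :
    gchoose x k = (descPochhammer ℝ k).eval x / k ! := by
  rw [gchoose, descPochhammer_eval_eq_prod_range]

theorem gchoose_nonneg {x : ℝ} {k : ℕ} (h : (k : ℝ) - 1 ≤ x) : 0 ≤ gchoose x k := by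
  rw [gchoose_eq_descPochhammer_eval]
  exact div_nonneg (descPochhammer_nonneg h) (by positivity)

theorem gchoose_pos_s16 {x : ℝ} {k : ℕ} (h : (k : ℝ) - 1 < x) : 0 < gchoose x k := by
  rw [gchoose_eq_descPochhammer_eval]
  exact div_pos (descPochhammer_pos h) (by positivity)

theorem gchoose_le_gchoose {x y : ℝ} {k : ℕ} (hx : (k : ℝ) - 1 ≤ x) (hxy : x ≤ y) :
    gchoose x k ≤ gchoose y k := by
  simp only [gchoose_eq_descPochhammer_eval]
  gcongr
  exact descPochhammer_eval_le_eval hx hxy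

theorem gchoose_succ_eq_add (x : ℝ) (k : ℕ) :
    gchoose x (k + 1) = gchoose (x - 1) (k + 1) + gchoose (x - 1) k := by
  simp only [gchoose_eq_descPochhammer_eval, Nat.factorial_succ,
    descPochhammer_succ_eval_eq_add k x]
  push_cast
  field_simp

theorem gchoose_succ_sub_le {u v : ℝ} {k : ℕ} (hv : (k : ℝ) ≤ v) (hvu : v ≤ u) :
    gchoose u (k + 1) - gchoose v (k + 1) ≤ (u - v) * gchoose u k := by
  simp only [gchoose_eq_descPochhammer_eval, ← sub_div, Nat.factorial_succ]
  have := descPochhammer_succ_eval_sub_le hv hvu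
  push_cast
  rw [div_le_iff₀ (by positivity)]
  convert this using 1
  field_simp

theorem le_gchoose_succ_sub {u v : ℝ} {k : ℕ} (hv : (k : ℝ) ≤ v) (hvu : v ≤ u) :
    (u - v) * gchoose (v - 1) k ≤ gchoose u (k + 1) - gchoose v (k + 1) := by
  simp only [gchoose_eq_descPochhammer_eval, ← sub_div, Nat.factorial_succ]
  have := le_descPochhammer_succ_eval_sub hv hvu
  push_cast
  rw [le_div_iff₀ (by positivity)]
  convert this using 1
  field_simp

theorem gchoose_div_gchoose_succ (x y : ℝ) (k : ℕ) :
    gchoose x k / gchoose y (k + 1) =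
      (k + 1) * (descPochhammer ℝ k).eval x / (descPochhammer ℝ (k + 1)).eval y := by
  simp only [gchoose_eq_descPochhammer_eval, Nat.factorial_succ]
  push_cast
  rw [div_div_div_eq, mul_left_comm, mul_comm (k ! : ℝ), ← mul_assoc,
    mul_div_mul_right _ _ (by positivity)]

theorem two_mul_add_three_mul_pow_le {S : Type*} [CommRing S] [LinearOrder S]
    [IsStrictOrderedRing S] {a u : S} (m : ℕ) (ha : 0 ≤ a) (hau : a ≤ u)
    (hgap : 4 * (m + 1) * (m + 2) * (u - a) ≤ u) :
    (2 * m + 3) * u ^ (2 * m + 2) ≤ 2 * (m + 2) * a ^ (2 * m + 2) := by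
  have hu : 0 ≤ u := ha.trans hau
  have hpow : a ^ (2 * m + 2) ≤ u ^ (2 * m + 2) := pow_le_pow_left₀ ha hau _
  have h := abs_pow_sub_pow_le u a (2 * m + 2)
  rw [abs_of_nonneg (sub_nonneg.2 hpow), abs_of_nonneg (sub_nonneg.2 hau), abs_of_nonneg hu,
    abs_of_nonneg ha, max_eq_left hau, show 2 * m + 2 - 1 = 2 * m + 1 by omega] at h
  push_cast at h
  linear_combination (2 * ((m : S) + 2)) * h +
    mul_le_mul_of_nonneg_right hgap (pow_nonneg hu (2 * m + 1))

theorem inv_two_mul_le_gchoose_div_sub_gchoose_div (m : ℕ) {u w a : ℝ} (ha : 0 < a)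
    (hau : a ≤ u - m - 2) (haw : a ≤ w - m - 1) (hwu : w - 1 ≤ u)
    (hgap : 4 * (m + 1) * (m + 2) * (u - a) ≤ u) :
    (2 * u)⁻¹ ≤ gchoose (u - 2) (m + 1) / gchoose u (m + 2) -
      gchoose (u - 1) m / gchoose (w - 1) (m + 1) := by
  rw [gchoose_div_gchoose_succ, gchoose_div_gchoose_succ]
  set Eu := (descPochhammer ℝ (m + 2)).eval u
  set Ew := (descPochhammer ℝ (m + 1)).eval (w - 1)
  set E2 := (descPochhammer ℝ (m + 1)).eval (u - 2)
  set E1 := (descPochhammer ℝ m).eval (u - 1)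
  have hu : 0 < u := by linarith
  have hEu : Eu ≤ u ^ (m + 2) := descPochhammer_eval_le_pow (by push_cast; linarith) le_rfl
  have hEw : Ew ≤ u ^ (m + 1) := descPochhammer_eval_le_pow (by push_cast; linarith) hwu
  have hE1 : E1 ≤ u ^ m := descPochhammer_eval_le_pow (by linarith) (by linarith)
  have hE2 : a ^ (m + 1) ≤ E2 := (pow_le_pow_left₀ ha.le (by push_cast; linarith) _).trans
    (pow_le_descPochhammer_eval (by push_cast; linarith))
  have hEw' : a ^ (m + 1) ≤ Ew := (pow_le_pow_left₀ ha.le (by push_cast; linarith) _).trans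
    (pow_le_descPochhammer_eval (by push_cast; linarith))
  have hEu0 : 0 < Eu := descPochhammer_pos (by push_cast; linarith)
  have hEw0 : 0 < Ew := (pow_pos ha _).trans_le hEw'
  have hE10 : 0 ≤ E1 := descPochhammer_nonneg (by linarith)
  have hE20 : 0 ≤ E2 := (pow_nonneg ha.le _).trans hE2
  have upper : Eu * (Ew + 2 * u * ((m + 1) * E1)) ≤ u * ((2 * m + 3) * u ^ (2 * m + 2)) :=
    calc _ ≤ u ^ (m + 2) * (u ^ (m + 1) + 2 * u * ((m + 1) * u ^ m)) := by gcongr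
      _ = _ := by ring
  have lower : u * (2 * (m + 2) * a ^ (2 * m + 2)) ≤ 2 * u * ((m + 2) * (E2 * Ew)) :=
    calc _ = 2 * u * ((m + 2) * (a ^ (m + 1) * a ^ (m + 1))) := by ring
      _ ≤ _ := by gcongr
  have hpow := mul_le_mul_of_nonneg_left
    (two_mul_add_three_mul_pow_le m ha.le (by linarith) hgap) hu.le
  rw [div_sub_div _ _ hEu0.ne' hEw0.ne', inv_le_iff_one_le_mul₀' (by positivity), mul_div_assoc',
    le_div_iff₀ (by positivity)]
  push_cast
  linarith

theorem mul_div_sub_div_le {K : Type*} [Field K] [LinearOrder K] [IsStrictOrderedRing K]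
    {D δ ε p q P Q : K} (hP : 0 < P) (hQ : 0 < Q) (hp : 0 ≤ p) (hq : 0 ≤ q)
    (hδ : D ≤ δ * P) (hε : ε * Q ≤ D) : D * (p / P - q / Q) ≤ δ * p - ε * q := by
  have h1 : D / P ≤ δ := (div_le_iff₀ hP).2 hδ
  have h2 : ε ≤ D / Q := (le_div_iff₀ hQ).2 hε
  calc D * (p / P - q / Q) = D / P * p - D / Q * q := by ring
    _ ≤ δ * p - ε * q := by gcongr

theorem mul_div_sub_div_le_gchoose_add_sub (m : ℕ) {u v w : ℝ}
    (hsum : gchoose u (m + 3) = gchoose v (m + 3) + gchoose w (m + 2))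
    (hw : (m : ℝ) + 2 < w) (hwu : w < u - 1) (hu1v : u - 1 ≤ v) (hvu : v ≤ u) :
    (gchoose (u - 1) (m + 2) - gchoose w (m + 2)) *
        (gchoose (u - 2) (m + 1) / gchoose u (m + 2) -
          gchoose (u - 1) m / gchoose (w - 1) (m + 1)) ≤
      gchoose v (m + 2) + gchoose w (m + 1) - gchoose u (m + 2) := by
  have hvD : gchoose v (m + 3) - gchoose (u - 1) (m + 3) =
      gchoose (u - 1) (m + 2) - gchoose w (m + 2) := by
    rw [gchoose_succ_eq_add u] at hsum; linarith
  have hDv := calc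
    _ = gchoose v (m + 3) - gchoose (u - 1) (m + 3) := hvD.symm
    _ ≤ (v - (u - 1)) * gchoose v (m + 2) := gchoose_succ_sub_le (by push_cast; linarith) hu1v
    _ ≤ (v - (u - 1)) * gchoose u (m + 2) :=
      mul_le_mul_of_nonneg_left (gchoose_le_gchoose (by push_cast; linarith) hvu) (by linarith)
  have hDw :
      (u - 1 - w) * gchoose (w - 1) (m + 1) ≤ gchoose (u - 1) (m + 2) - gchoose w (m + 2) :=
    le_gchoose_succ_sub (by push_cast; linarith) hwu.le
  have hv_diff : (v - (u - 1)) * gchoose (u - 1 - 1) (m + 1) ≤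
      gchoose v (m + 2) - gchoose (u - 1) (m + 2) :=
    le_gchoose_succ_sub (by push_cast; linarith) hu1v
  have hw_diff := gchoose_succ_sub_le (k := m) (by linarith) hwu.le
  rw [show u - 1 - 1 = u - 2 by ring] at hv_diff
  have hpascal := gchoose_succ_eq_add u (m + 1)
  calc _ ≤ (v - (u - 1)) * gchoose (u - 2) (m + 1) - (u - 1 - w) * gchoose (u - 1) m :=
        mul_div_sub_div_le (gchoose_pos_s16 (by push_cast; linarith))
          (gchoose_pos_s16 (by push_cast; linarith)) (gchoose_nonneg (by push_cast; linarith))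
          (gchoose_nonneg (by linarith)) hDv hDw
    _ ≤ _ := by linarith

/-- Part (1) of the defect estimate: for `r ≥ 3` there is a threshold `u₀(r)` such that
if `C(u,r) = C(v,r) + C(w,r-1)`, `C' ≤ C(w,r-1) < C(u-1,r-1) - C` and `w > u - 3r`,
then `C(v,r-1) + C(w,r-2) - C(u,r-1) > C/(3u)`. -/
theorem stmt16 (r : ℕ) (hr : 3 ≤ r) :
    ∃ u0 : ℝ, ∀ C C' u v w : ℝ, 0 < C → 0 < C' →
      (r : ℝ) - 1 ≤ v → (r : ℝ) - 2 ≤ w → u0 < u →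
      gchoose u r = gchoose v r + gchoose w (r - 1) →
      C' ≤ gchoose w (r - 1) →
      gchoose w (r - 1) < gchoose (u - 1) (r - 1) - C →
      u - 3 * r < w →
      C / (3 * u) < gchoose v (r - 1) + gchoose w (r - 2) - gchoose u (r - 1) := by
  obtain ⟨m, rfl⟩ : ∃ m, r = m + 3 := ⟨r - 3, by omega⟩
  refine ⟨16 * ((m : ℝ) + 3) ^ 3, fun C C' u v w hC hC' hv hw hu hsum hC'w hwC hw3 => ?_⟩
  simp only [show m + 3 - 1 = m + 2 from rfl, show m + 3 - 2 = m + 1 from rfl] at hsum hC'w hwC ⊢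
  push_cast at hv hw hu hw3
  have hm : (0 : ℝ) ≤ m := m.cast_nonneg
  have hu_gap : 16 * ((m + 1) * (m + 2) * (m + 3)) ≤ u := by nlinarith
  have hu_pos : 4 * ((m : ℝ) + 3) < u := by nlinarith [mul_nonneg hm hm]
  have hwu : w < u - 1 := by
    by_contra! h
    linarith [gchoose_le_gchoose (k := m + 2) (by push_cast; linarith) h]
  have hu1v : u - 1 ≤ v := by
    by_contra! h
    rw [gchoose_succ_eq_add u] at hsum
    linarith [gchoose_le_gchoose (k := m + 3) (by push_cast; linarith) h.le]
  have hvu : v ≤ u := by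
    by_contra! h
    linarith [gchoose_le_gchoose (k := m + 3) (by push_cast; linarith) h.le]
  calc C / (3 * u) < (gchoose (u - 1) (m + 2) - gchoose w (m + 2)) / (2 * u) := by
        rw [div_lt_div_iff₀ (by linarith) (by linarith)]; nlinarith
    _ ≤ (gchoose (u - 1) (m + 2) - gchoose w (m + 2)) * (gchoose (u - 2) (m + 1) /
          gchoose u (m + 2) - gchoose (u - 1) m / gchoose (w - 1) (m + 1)) := by
        rw [div_eq_mul_inv]
        gcongr
        · linarith
        · exact inv_two_mul_le_gchoose_div_sub_gchoose_div m (a := u - 4 * (m + 3))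
            (by linarith) (by linarith) (by linarith) (by linarith) (by nlinarith)
    _ ≤ _ := mul_div_sub_div_le_gchoose_add_sub m hsum (by linarith) hwu hu1v hvu
end
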